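/- arXiv:0904.0268 — 6 statements merged into one kernel-verified Lean document; each statement's English description precedes it below -/
import Mathlib

section
/- For all M > 0 sufficiently large (explicitly, whenever 2 C₀ C₁ e^{−(θ−θ₁)M}/(θ−θ₁) < 1/2), the map 𝒯 is a strict contraction on the Banach space of bounded continuous functions V : (−∞, −M] → ℂ^N with the sup norm: for all such V₁, V₂ and all x ≤ −M, ‖(𝒯V₁)(x) − (𝒯V₂)(x)‖ ≤ (2 C₀ C₁/(θ−θ₁)) e^{θ₁ x} e^{−(θ−θ₁)M} ‖V₁ − V₂‖_∞ ≤ (1/2) ‖V₁ − V₂‖_∞. -/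
open MeasureTheory

private lemma gl_interval_exp {a : ℝ} (ha : 0 < a) (y c : ℝ) :
    ∫ t in y..c, Real.exp (a * t) = (Real.exp (a * c) - Real.exp (a * y)) / a := by
  rw [intervalIntegral.integral_comp_mul_left Real.exp ha.ne', integral_exp, smul_eq_mul]
  field_simp

private lemma gl_exp_integrableOn_Iic {a : ℝ} (ha : 0 < a) (c : ℝ) :
    IntegrableOn (fun y => Real.exp (a * y)) (Set.Iic c) := by
  refine integrableOn_Iic_of_intervalIntegral_norm_bounded (Real.exp (a * c) / a) c
    (fun i => ((Real.continuous_exp.comp (continuous_const.mul continuous_id)).integrableOn_Icc).mono_set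
      Set.Ioc_subset_Icc_self) Filter.tendsto_id (Filter.Eventually.of_forall fun y => ?_)
  simp only [id_eq]
  simp_rw [Real.norm_of_nonneg (Real.exp_pos _).le]
  rw [gl_interval_exp ha]
  gcongr
  linarith [Real.exp_pos (a * y)]

private lemma gl_exp_integral_Iic {a : ℝ} (ha : 0 < a) (c : ℝ) :
    ∫ y in Set.Iic c, Real.exp (a * y) = Real.exp (a * c) / a := by
  refine tendsto_nhds_unique
    (intervalIntegral_tendsto_integral_Iic c (gl_exp_integrableOn_Iic ha c) Filter.tendsto_id) ?_
  have h2 : Filter.Tendsto (fun y : ℝ => (Real.exp (a * c) - Real.exp (a * y)) / a)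
      Filter.atBot (nhds ((Real.exp (a * c) - 0) / a)) := by
    refine Filter.Tendsto.div_const ?_ a
    exact tendsto_const_nhds.sub (Real.tendsto_exp_atBot.comp (Filter.tendsto_id.const_mul_atBot ha))
  rw [sub_zero] at h2
  exact h2.congr fun y => (gl_interval_exp ha y c).symm

private lemma gl_ae_lt_Iic (x : ℝ) :
    ∀ᵐ y ∂(volume.restrict (Set.Iic x)), y < x := by
  refine ae_iff.2 ?_
  have hm : MeasurableSet {y : ℝ | ¬ y < x} := by
    have : {y : ℝ | ¬ y < x} = Set.Ici x := by ext y; simp [not_lt]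
    rw [this]; exact measurableSet_Ici
  rw [Measure.restrict_apply hm]
  refine measure_mono_null ?_ (Real.volume_singleton (a := x))
  rintro y ⟨hy1, hy2⟩
  simp only [Set.mem_setOf_eq, not_lt] at hy1
  simp [le_antisymm hy2 hy1]

private lemma gl_ae_gt_Icc (x b : ℝ) :
    ∀ᵐ y ∂(volume.restrict (Set.Icc x b)), x < y := by
  refine ae_iff.2 ?_
  have hm : MeasurableSet {y : ℝ | ¬ x < y} := by
    have : {y : ℝ | ¬ x < y} = Set.Iic x := by ext y; simp [not_lt]
    rw [this]; exact measurableSet_Iic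
  rw [Measure.restrict_apply hm]
  refine measure_mono_null ?_ (Real.volume_singleton (a := x))
  rintro y ⟨hy1, hy2⟩
  simp only [Set.mem_setOf_eq, not_lt] at hy1
  simp [le_antisymm hy1 hy2.1]

set_option maxHeartbeats 1000000 in
/-- for `M` large enough (explicitly, `2C₀C₁e^{-(θ-θ₁)M}/(θ-θ₁) < 1/2`),
the fixed-point map `𝒯` of the gap lemma is a strict contraction on bounded continuous
functions on `(-∞, -M]` in the sup norm. -/
theorem gap_lemma_contraction {N : ℕ} (C0 C1 θ θ1 M : ℝ)
    (hC0 : 0 < C0) (hC1 : 0 < C1) (hθ1 : 0 < θ1) (hθ1θ : θ1 < θ) (hM : 0 < M)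
    (Am : EuclideanSpace ℂ (Fin N) →L[ℂ] EuclideanSpace ℂ (Fin N)) (μ : ℂ)
    (P Q : EuclideanSpace ℂ (Fin N) →L[ℂ] EuclideanSpace ℂ (Fin N))
    (hPQ : P + Q = 1) (hP : P * P = P) (hQ : Q * Q = Q)
    (hPcomm : P * Am = Am * P) (hQcomm : Q * Am = Am * Q)
    (hPexp : ∀ x : ℝ, 0 < x →
      ‖NormedSpace.exp (x • (Am - μ • 1)) * P‖ ≤ C1 * Real.exp (θ1 * x))
    (hQexp : ∀ x : ℝ, x < 0 →
      ‖NormedSpace.exp (x • (Am - μ • 1)) * Q‖ ≤ C1 * Real.exp (θ1 * x))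
    (Θ : ℝ → (EuclideanSpace ℂ (Fin N) →L[ℂ] EuclideanSpace ℂ (Fin N)))
    (hΘc : Continuous Θ) (hΘ : ∀ y ≤ (0 : ℝ), ‖Θ y‖ ≤ C0 * Real.exp (θ * y))
    (Vm : EuclideanSpace ℂ (Fin N))
    (hsmall : 2 * C0 * C1 * Real.exp (-(θ - θ1) * M) / (θ - θ1) < 1 / 2)
    (V1 V2 : ℝ → EuclideanSpace ℂ (Fin N))
    (hV1c : Continuous V1) (hV2c : Continuous V2)
    (hV1b : ∃ B, ∀ x ≤ -M, ‖V1 x‖ ≤ B) (hV2b : ∃ B, ∀ x ≤ -M, ‖V2 x‖ ≤ B) :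
    ∀ x ≤ -M,
      ‖(Vm + (∫ y in Set.Iic x, (NormedSpace.exp ((x - y) • (Am - μ • 1))) (P (Θ y (V1 y))))
          - ∫ y in Set.Icc x (-M), (NormedSpace.exp ((x - y) • (Am - μ • 1))) (Q (Θ y (V1 y))))
        - (Vm + (∫ y in Set.Iic x, (NormedSpace.exp ((x - y) • (Am - μ • 1))) (P (Θ y (V2 y))))
          - ∫ y in Set.Icc x (-M), (NormedSpace.exp ((x - y) • (Am - μ • 1))) (Q (Θ y (V2 y))))‖
        ≤ (2 * C0 * C1 / (θ - θ1)) * Real.exp (θ1 * x) * Real.exp (-(θ - θ1) * M)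
            * sSup ((fun y => ‖V1 y - V2 y‖) '' Set.Iic (-M)) ∧
      (2 * C0 * C1 / (θ - θ1)) * Real.exp (θ1 * x) * Real.exp (-(θ - θ1) * M)
            * sSup ((fun y => ‖V1 y - V2 y‖) '' Set.Iic (-M))
        ≤ (1 / 2) * sSup ((fun y => ‖V1 y - V2 y‖) '' Set.Iic (-M)) := by
  intro x hx
  have ha : 0 < θ - θ1 := sub_pos.2 hθ1θ
  set a : ℝ := θ - θ1 with ha_def
  set S : ℝ := sSup ((fun y => ‖V1 y - V2 y‖) '' Set.Iic (-M)) with hS_def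
  obtain ⟨B1, hB1⟩ := hV1b
  obtain ⟨B2, hB2⟩ := hV2b
  have hbdd : BddAbove ((fun y => ‖V1 y - V2 y‖) '' Set.Iic (-M)) := by
    refine ⟨B1 + B2, ?_⟩
    rintro - ⟨y, hy, rfl⟩
    exact (norm_sub_le _ _).trans (add_le_add (hB1 y hy) (hB2 y hy))
  have hSle : ∀ y ≤ -M, ‖V1 y - V2 y‖ ≤ S := fun y hy => le_csSup hbdd ⟨y, hy, rfl⟩
  have hS0 : 0 ≤ S := le_trans (norm_nonneg _) (hSle (-M) le_rfl)
  have hxneg : x < 0 := lt_of_le_of_lt hx (by linarith)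
  -- key estimate for the P-part
  have key : ∀ (W : ℝ → EuclideanSpace ℂ (Fin N)), Continuous W →
      ∀ D : ℝ, (∀ y ≤ -M, ‖W y‖ ≤ D) →
      IntegrableOn (fun y => (NormedSpace.exp ((x - y) • (Am - μ • 1))) (P (Θ y (W y))))
        (Set.Iic x) ∧
      ‖∫ y in Set.Iic x, (NormedSpace.exp ((x - y) • (Am - μ • 1))) (P (Θ y (W y)))‖ ≤
        C0 * C1 * D * Real.exp (θ1 * x) * (Real.exp (a * x) / a) := by
    intro W hWc D hWD
    have hD0 : 0 ≤ D := le_trans (norm_nonneg _) (hWD (-M) le_rfl)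
    set K : ℝ := C0 * C1 * D * Real.exp (θ1 * x) with hK_def
    have hcont : Continuous
        (fun y => (NormedSpace.exp ((x - y) • (Am - μ • 1))) (P (Θ y (W y)))) := by
      refine Continuous.clm_apply ?_ ?_
      · exact (continuous_iff_continuousAt.2 fun z => (NormedSpace.exp_analytic (𝕂 := ℂ) z).continuousAt).comp
          ((continuous_const.sub continuous_id).smul continuous_const)
      · exact P.continuous.comp (hΘc.clm_apply hWc)
    have hbound : ∀ y, y < x →
        ‖(NormedSpace.exp ((x - y) • (Am - μ • 1))) (P (Θ y (W y)))‖ ≤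
          K * Real.exp (a * y) := by
      intro y hy
      have hy0 : y ≤ 0 := hy.le.trans hxneg.le
      have hyM : y ≤ -M := hy.le.trans hx
      have h1 : ‖(NormedSpace.exp ((x - y) • (Am - μ • 1))) (P (Θ y (W y)))‖ ≤
          ‖NormedSpace.exp ((x - y) • (Am - μ • 1)) * P‖ * ‖Θ y (W y)‖ := by
        rw [← ContinuousLinearMap.mul_apply]
        exact ContinuousLinearMap.le_opNorm _ _
      have h2 : ‖Θ y (W y)‖ ≤ (C0 * Real.exp (θ * y)) * D :=
        (ContinuousLinearMap.le_opNorm _ _).trans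
          (mul_le_mul (hΘ y hy0) (hWD y hyM) (norm_nonneg _) (by positivity))
      have he : Real.exp (θ1 * (x - y)) * Real.exp (θ * y)
          = Real.exp (θ1 * x) * Real.exp (a * y) := by
        rw [← Real.exp_add, ← Real.exp_add]
        congr 1
        rw [ha_def]; ring
      calc ‖(NormedSpace.exp ((x - y) • (Am - μ • 1))) (P (Θ y (W y)))‖
          ≤ ‖NormedSpace.exp ((x - y) • (Am - μ • 1)) * P‖ * ‖Θ y (W y)‖ := h1
        _ ≤ (C1 * Real.exp (θ1 * (x - y))) * ((C0 * Real.exp (θ * y)) * D) :=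
            mul_le_mul (hPexp _ (sub_pos.2 hy)) h2 (norm_nonneg _) (by positivity)
        _ = C0 * C1 * D * (Real.exp (θ1 * (x - y)) * Real.exp (θ * y)) := by ring
        _ = C0 * C1 * D * (Real.exp (θ1 * x) * Real.exp (a * y)) := by rw [he]
        _ = K * Real.exp (a * y) := by rw [hK_def]; ring
    have hgint : Integrable (fun y => K * Real.exp (a * y)) (volume.restrict (Set.Iic x)) :=
      (gl_exp_integrableOn_Iic ha x).const_mul K
    have haeb : ∀ᵐ y ∂(volume.restrict (Set.Iic x)),
        ‖(NormedSpace.exp ((x - y) • (Am - μ • 1))) (P (Θ y (W y)))‖ ≤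
          K * Real.exp (a * y) := by
      filter_upwards [gl_ae_lt_Iic x] with y hy
      exact hbound y hy
    have hint : IntegrableOn
        (fun y => (NormedSpace.exp ((x - y) • (Am - μ • 1))) (P (Θ y (W y))))
        (Set.Iic x) :=
      hgint.mono' hcont.aestronglyMeasurable.restrict haeb
    refine ⟨hint, ?_⟩
    calc ‖∫ y in Set.Iic x, (NormedSpace.exp ((x - y) • (Am - μ • 1))) (P (Θ y (W y)))‖
        ≤ ∫ y in Set.Iic x, K * Real.exp (a * y) :=
          norm_integral_le_of_norm_le hgint haeb
      _ = K * (Real.exp (a * x) / a) := by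
          rw [integral_const_mul, gl_exp_integral_Iic ha]
      _ = C0 * C1 * D * Real.exp (θ1 * x) * (Real.exp (a * x) / a) := by rw [hK_def]
  -- key estimate for the Q-part
  have keyQ : ∀ (W : ℝ → EuclideanSpace ℂ (Fin N)), Continuous W →
      ∀ D : ℝ, (∀ y ≤ -M, ‖W y‖ ≤ D) →
      IntegrableOn (fun y => (NormedSpace.exp ((x - y) • (Am - μ • 1))) (Q (Θ y (W y))))
        (Set.Icc x (-M)) ∧
      ‖∫ y in Set.Icc x (-M), (NormedSpace.exp ((x - y) • (Am - μ • 1))) (Q (Θ y (W y)))‖ ≤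
        C0 * C1 * D * Real.exp (θ1 * x) * (Real.exp (a * (-M)) / a) := by
    intro W hWc D hWD
    have hD0 : 0 ≤ D := le_trans (norm_nonneg _) (hWD (-M) le_rfl)
    set K : ℝ := C0 * C1 * D * Real.exp (θ1 * x) with hK_def
    have hK0 : 0 ≤ K := by rw [hK_def]; positivity
    have hcont : Continuous
        (fun y => (NormedSpace.exp ((x - y) • (Am - μ • 1))) (Q (Θ y (W y)))) := by
      refine Continuous.clm_apply ?_ ?_
      · exact (continuous_iff_continuousAt.2 fun z => (NormedSpace.exp_analytic (𝕂 := ℂ) z).continuousAt).comp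
          ((continuous_const.sub continuous_id).smul continuous_const)
      · exact Q.continuous.comp (hΘc.clm_apply hWc)
    have hint : IntegrableOn
        (fun y => (NormedSpace.exp ((x - y) • (Am - μ • 1))) (Q (Θ y (W y))))
        (Set.Icc x (-M)) := hcont.integrableOn_Icc
    have hbound : ∀ y, x < y → y ≤ -M →
        ‖(NormedSpace.exp ((x - y) • (Am - μ • 1))) (Q (Θ y (W y)))‖ ≤
          K * Real.exp (a * y) := by
      intro y hy hyM
      have hy0 : y ≤ 0 := hyM.trans (by linarith)
      have h2 : ‖Θ y (W y)‖ ≤ (C0 * Real.exp (θ * y)) * D :=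
        (ContinuousLinearMap.le_opNorm _ _).trans
          (mul_le_mul (hΘ y hy0) (hWD y hyM) (norm_nonneg _) (by positivity))
      have he : Real.exp (θ1 * (x - y)) * Real.exp (θ * y)
          = Real.exp (θ1 * x) * Real.exp (a * y) := by
        rw [← Real.exp_add, ← Real.exp_add]
        congr 1
        rw [ha_def]; ring
      calc ‖(NormedSpace.exp ((x - y) • (Am - μ • 1))) (Q (Θ y (W y)))‖
          ≤ ‖NormedSpace.exp ((x - y) • (Am - μ • 1)) * Q‖ * ‖Θ y (W y)‖ := by
            rw [← ContinuousLinearMap.mul_apply]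
            exact ContinuousLinearMap.le_opNorm _ _
        _ ≤ (C1 * Real.exp (θ1 * (x - y))) * ((C0 * Real.exp (θ * y)) * D) :=
            mul_le_mul (hQexp _ (sub_neg.2 hy)) h2 (norm_nonneg _) (by positivity)
        _ = C0 * C1 * D * (Real.exp (θ1 * (x - y)) * Real.exp (θ * y)) := by ring
        _ = C0 * C1 * D * (Real.exp (θ1 * x) * Real.exp (a * y)) := by rw [he]
        _ = K * Real.exp (a * y) := by rw [hK_def]; ring
    have hgintM : Integrable (fun y => K * Real.exp (a * y))
        (volume.restrict (Set.Iic (-M))) :=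
      (gl_exp_integrableOn_Iic ha (-M)).const_mul K
    have hgint : Integrable (fun y => K * Real.exp (a * y))
        (volume.restrict (Set.Icc x (-M))) :=
      (((gl_exp_integrableOn_Iic ha (-M)).mono_set Set.Icc_subset_Iic_self).const_mul K)
    have haeb : ∀ᵐ y ∂(volume.restrict (Set.Icc x (-M))),
        ‖(NormedSpace.exp ((x - y) • (Am - μ • 1))) (Q (Θ y (W y)))‖ ≤
          K * Real.exp (a * y) := by
      filter_upwards [gl_ae_gt_Icc x (-M), ae_restrict_mem measurableSet_Icc] with y hy hy2
      exact hbound y hy hy2.2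
    refine ⟨hint, ?_⟩
    calc ‖∫ y in Set.Icc x (-M), (NormedSpace.exp ((x - y) • (Am - μ • 1))) (Q (Θ y (W y)))‖
        ≤ ∫ y in Set.Icc x (-M), K * Real.exp (a * y) :=
          norm_integral_le_of_norm_le hgint haeb
      _ ≤ ∫ y in Set.Iic (-M), K * Real.exp (a * y) :=
          setIntegral_mono_set hgintM
            (Filter.Eventually.of_forall fun y => by positivity)
            (HasSubset.Subset.eventuallyLE Set.Icc_subset_Iic_self)
      _ = K * (Real.exp (a * (-M)) / a) := by
          rw [integral_const_mul, gl_exp_integral_Iic ha]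
      _ = C0 * C1 * D * Real.exp (θ1 * x) * (Real.exp (a * (-M)) / a) := by rw [hK_def]
  have hP1 := (key V1 hV1c B1 hB1).1
  have hP2 := (key V2 hV2c B2 hB2).1
  have hPW := key (fun y => V1 y - V2 y) (hV1c.sub hV2c) S hSle
  have hQ1 := (keyQ V1 hV1c B1 hB1).1
  have hQ2 := (keyQ V2 hV2c B2 hB2).1
  have hQW := keyQ (fun y => V1 y - V2 y) (hV1c.sub hV2c) S hSle
  have hexpM' : Real.exp (a * (-M)) = Real.exp (-a * M) := by congr 1; ring
  have hexpMle : Real.exp (a * x) ≤ Real.exp (-a * M) := by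
    rw [Real.exp_le_exp]
    nlinarith [mul_le_mul_of_nonneg_left hx ha.le]
  constructor
  · -- main contraction estimate
    have hsub1 :
        ((∫ y in Set.Iic x, (NormedSpace.exp ((x - y) • (Am - μ • 1))) (P (Θ y (V1 y))))
          - ∫ y in Set.Iic x, (NormedSpace.exp ((x - y) • (Am - μ • 1))) (P (Θ y (V2 y))))
        = ∫ y in Set.Iic x,
            (NormedSpace.exp ((x - y) • (Am - μ • 1))) (P (Θ y (V1 y - V2 y))) := by
      rw [← integral_sub hP1 hP2]
      exact integral_congr_ae (Filter.Eventually.of_forall fun y => by simp [map_sub])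
    have hsub2 :
        ((∫ y in Set.Icc x (-M), (NormedSpace.exp ((x - y) • (Am - μ • 1))) (Q (Θ y (V1 y))))
          - ∫ y in Set.Icc x (-M), (NormedSpace.exp ((x - y) • (Am - μ • 1))) (Q (Θ y (V2 y))))
        = ∫ y in Set.Icc x (-M),
            (NormedSpace.exp ((x - y) • (Am - μ • 1))) (Q (Θ y (V1 y - V2 y))) := by
      rw [← integral_sub hQ1 hQ2]
      exact integral_congr_ae (Filter.Eventually.of_forall fun y => by simp [map_sub])
    calc ‖(Vm + (∫ y in Set.Iic x, (NormedSpace.exp ((x - y) • (Am - μ • 1))) (P (Θ y (V1 y))))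
          - ∫ y in Set.Icc x (-M), (NormedSpace.exp ((x - y) • (Am - μ • 1))) (Q (Θ y (V1 y))))
        - (Vm + (∫ y in Set.Iic x, (NormedSpace.exp ((x - y) • (Am - μ • 1))) (P (Θ y (V2 y))))
          - ∫ y in Set.Icc x (-M), (NormedSpace.exp ((x - y) • (Am - μ • 1))) (Q (Θ y (V2 y))))‖
        = ‖(∫ y in Set.Iic x,
              (NormedSpace.exp ((x - y) • (Am - μ • 1))) (P (Θ y (V1 y - V2 y))))
            - ∫ y in Set.Icc x (-M),
              (NormedSpace.exp ((x - y) • (Am - μ • 1))) (Q (Θ y (V1 y - V2 y)))‖ := by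
          rw [← hsub1, ← hsub2]; congr 1; abel
      _ ≤ ‖∫ y in Set.Iic x,
              (NormedSpace.exp ((x - y) • (Am - μ • 1))) (P (Θ y (V1 y - V2 y)))‖
          + ‖∫ y in Set.Icc x (-M),
              (NormedSpace.exp ((x - y) • (Am - μ • 1))) (Q (Θ y (V1 y - V2 y)))‖ :=
          norm_sub_le _ _
      _ ≤ C0 * C1 * S * Real.exp (θ1 * x) * (Real.exp (a * x) / a)
          + C0 * C1 * S * Real.exp (θ1 * x) * (Real.exp (a * (-M)) / a) :=
          add_le_add hPW.2 hQW.2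
      _ ≤ (2 * C0 * C1 / a) * Real.exp (θ1 * x) * Real.exp (-a * M) * S := by
          have h1 : C0 * C1 * S * Real.exp (θ1 * x) * (Real.exp (a * x) / a)
              ≤ C0 * C1 * S * Real.exp (θ1 * x) * (Real.exp (-a * M) / a) := by
            gcongr
          have h2 : C0 * C1 * S * Real.exp (θ1 * x) * (Real.exp (a * (-M)) / a)
              = C0 * C1 * S * Real.exp (θ1 * x) * (Real.exp (-a * M) / a) := by
            rw [hexpM']
          have h3 : (2 * C0 * C1 / a) * Real.exp (θ1 * x) * Real.exp (-a * M) * S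
              = 2 * (C0 * C1 * S * Real.exp (θ1 * x) * (Real.exp (-a * M) / a)) := by
            ring
          linarith
  · -- the contraction factor is at most 1/2
    have hone : Real.exp (θ1 * x) ≤ 1 := by
      rw [Real.exp_le_one_iff]
      nlinarith
    have hcoef : (2 * C0 * C1 / a) * Real.exp (θ1 * x) * Real.exp (-a * M) ≤ 1 / 2 := by
      calc (2 * C0 * C1 / a) * Real.exp (θ1 * x) * Real.exp (-a * M)
          ≤ (2 * C0 * C1 / a) * 1 * Real.exp (-a * M) := by
            gcongr
        _ = 2 * C0 * C1 * Real.exp (-a * M) / a := by ring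
        _ ≤ 1 / 2 := hsmall.le
    calc (2 * C0 * C1 / a) * Real.exp (θ1 * x) * Real.exp (-a * M) * S
        ≤ (1 / 2) * S := mul_le_mul_of_nonneg_right hcoef hS0
end

section
/- There is a constant C₃, depending only on C₁, C₂, ‖A₊‖ and sup_x ‖A(x)‖, such that for any mesh points 0 ≤ x_j < x_{j+1} with step h_j := x_{j+1} − x_j ≤ 1: the one-step Euler commutation error E_j := P(x_{j+1}) − P(x_j) − h_j (A(x_j) P(x_j) − P(x_{j+1}) A₊) satisfies ‖E_j‖ ≤ C₃ h_j² e^{−θ̃ x_j}; consequently, if 𝒲_{j+1} = 𝒲_j + h_j A(x_j) 𝒲_j (the explicit Euler step) and 𝒵_j := P(x_j)^{−1} 𝒲_j, then ‖𝒵_{j+1} − 𝒵_j − h_j A₊ 𝒵_j‖ ≤ C₃ h_j² e^{−θ̃ x_j} ‖𝒵_j‖. That is, conjugation by P converts the Euler scheme for the variable-coefficient equation into the Euler scheme for the constant-coefficient limit, up to an error one order (in h_j) smaller than naive separation of the exponentially decaying part of A, and exponentially decaying in x_j. -/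
set_option maxHeartbeats 1000000
set_option synthInstance.maxHeartbeats 400000

/-- the conjugator `P` converts the explicit Euler scheme for `W' = A(x)W`
into the Euler scheme for the constant-coefficient limit, up to a commutation error of
order `h²e^{-θ̃x}`: the one-step commutation error
`E_j = P(x_{j+1}) - P(x_j) - h_j(A(x_j)P(x_j) - P(x_{j+1})A₊)` satisfies
`‖E_j‖ ≤ C₃h_j²e^{-θ̃x_j}`, and consequently if `𝒲_{j+1} = 𝒲_j + h_jA(x_j)𝒲_j` and
`𝒵_j := P(x_j)⁻¹𝒲_j`, then `‖𝒵_{j+1} - 𝒵_j - h_jA₊𝒵_j‖ ≤ C₃h_j²e^{-θ̃x_j}‖𝒵_j‖`. -/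
theorem discrete_conjugation_error {n : ℕ}
    (A : ℝ → (EuclideanSpace ℂ (Fin n) →L[ℂ] EuclideanSpace ℂ (Fin n)))
    (Ap : EuclideanSpace ℂ (Fin n) →L[ℂ] EuclideanSpace ℂ (Fin n))
    (hA : Continuous A) (CA : ℝ) (hCA : ∀ x : ℝ, ‖A x‖ ≤ CA)
    (θt C1 C2 : ℝ) (hθt : 0 < θt)
    (P Pinv P' P'' : ℝ → (EuclideanSpace ℂ (Fin n) →L[ℂ] EuclideanSpace ℂ (Fin n)))
    (hPinv : ∀ x : ℝ, P x * Pinv x = 1 ∧ Pinv x * P x = 1)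
    (hPinvb : ∀ x ≥ (0 : ℝ), ‖Pinv x‖ ≤ C2)
    (hP' : ∀ x : ℝ, HasDerivAt P (P' x) x)
    (hP'' : ∀ x : ℝ, HasDerivAt P' (P'' x) x)
    (hode : ∀ x : ℝ, P' x = A x * P x - P x * Ap)
    (hP'b : ∀ x ≥ (0 : ℝ), ‖P' x‖ ≤ C1 * Real.exp (-θt * x))
    (hP''b : ∀ x ≥ (0 : ℝ), ‖P'' x‖ ≤ C1 * Real.exp (-θt * x)) :
    ∃ C3 > (0 : ℝ), ∀ xj xj1 : ℝ, 0 ≤ xj → xj < xj1 → xj1 - xj ≤ 1 →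
      (‖P xj1 - P xj - (xj1 - xj) • (A xj * P xj - P xj1 * Ap)‖
          ≤ C3 * (xj1 - xj) ^ 2 * Real.exp (-θt * xj)) ∧
      (∀ Wj : EuclideanSpace ℂ (Fin n),
        ‖Pinv xj1 (Wj + (xj1 - xj) • A xj Wj) - Pinv xj Wj
            - (xj1 - xj) • Ap (Pinv xj Wj)‖
          ≤ C3 * (xj1 - xj) ^ 2 * Real.exp (-θt * xj) * ‖Pinv xj Wj‖) := by

  have hC1 : 0 ≤ C1 := by
    have := hP'b 0 le_rfl
    have h0 : (0:ℝ) ≤ ‖P' 0‖ := norm_nonneg _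
    simpa using le_trans h0 this
  have hC2 : 0 ≤ C2 := le_trans (norm_nonneg _) (hPinvb 0 le_rfl)
  refine ⟨(C1 * (1 + ‖Ap‖) + 1) * (C2 + 1), by positivity, ?_⟩
  intro xj xj1 hxj hlt hle
  set h : ℝ := xj1 - xj with hh
  have hpos : 0 < h := by simp [hh]; linarith
  set M : ℝ := C1 * Real.exp (-θt * xj) with hM
  have hMnn : 0 ≤ M := by positivity
  -- bounds on P'' and P' on [xj, xj1]
  have hIcc : Convex ℝ (Set.Icc xj xj1) := convex_Icc _ _
  have hexp : ∀ t ∈ Set.Icc xj xj1, C1 * Real.exp (-θt * t) ≤ M := by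
    intro t ht
    have : Real.exp (-θt * t) ≤ Real.exp (-θt * xj) := by
      apply Real.exp_le_exp.2
      nlinarith [ht.1]
    exact mul_le_mul_of_nonneg_left this hC1
  have hP''M : ∀ t ∈ Set.Icc xj xj1, ‖P'' t‖ ≤ M := fun t ht =>
    le_trans (hP''b t (le_trans hxj ht.1)) (hexp t ht)
  have hP'M : ∀ t ∈ Set.Icc xj xj1, ‖P' t‖ ≤ M := fun t ht =>
    le_trans (hP'b t (le_trans hxj ht.1)) (hexp t ht)
  have hmem0 : xj ∈ Set.Icc xj xj1 := ⟨le_rfl, le_of_lt hlt⟩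
  have hmem1 : xj1 ∈ Set.Icc xj xj1 := ⟨le_of_lt hlt, le_rfl⟩
  -- |P' t - P' xj| ≤ M * (t - xj) ≤ M * h on the interval
  have hstepP' : ∀ t ∈ Set.Icc xj xj1, ‖P' t - P' xj‖ ≤ M * h := by
    intro t ht
    have := hIcc.norm_image_sub_le_of_norm_hasDerivWithin_le
      (fun s hs => (hP'' s).hasDerivWithinAt) hP''M hmem0 ht
    calc ‖P' t - P' xj‖ ≤ M * ‖t - xj‖ := this
      _ ≤ M * h := by
          apply mul_le_mul_of_nonneg_left _ hMnn
          rw [Real.norm_eq_abs, abs_of_nonneg (by linarith [ht.1])]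
          linarith [ht.2]
  -- Taylor: ‖P xj1 - P xj - h • P' xj‖ ≤ M * h * h
  have hg : ∀ t ∈ Set.Icc xj xj1,
      HasDerivWithinAt (fun s => P s - s • P' xj) (P' t - P' xj) (Set.Icc xj xj1) t := by
    intro t ht
    exact ((hP' t).sub ((hasDerivAt_id t).smul_const (P' xj) |>.congr_deriv
      (one_smul ℝ _))).hasDerivWithinAt
  have htaylor : ‖P xj1 - P xj - h • P' xj‖ ≤ M * h * h := by
    have := hIcc.norm_image_sub_le_of_norm_hasDerivWithin_le hg hstepP' hmem0 hmem1
    have heq : (P xj1 - xj1 • P' xj) - (P xj - xj • P' xj)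
        = P xj1 - P xj - h • P' xj := by
      rw [hh]; module
    rw [heq] at this
    calc ‖P xj1 - P xj - h • P' xj‖ ≤ M * h * ‖xj1 - xj‖ := this
      _ = M * h * h := by rw [Real.norm_eq_abs, abs_of_pos hpos, hh]
  -- ‖P xj1 - P xj‖ ≤ M * h
  have hPstep : ‖P xj1 - P xj‖ ≤ M * h := by
    have := hIcc.norm_image_sub_le_of_norm_hasDerivWithin_le
      (fun s hs => (hP' s).hasDerivWithinAt) hP'M hmem0 hmem1
    calc ‖P xj1 - P xj‖ ≤ M * ‖xj1 - xj‖ := this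
      _ = M * h := by rw [Real.norm_eq_abs, abs_of_pos hpos, hh]
  -- decompose E
  set E := P xj1 - P xj - h • (A xj * P xj - P xj1 * Ap) with hE
  set e : ℝ := Real.exp (-θt * xj) with he
  have hexp0 : (0:ℝ) < e := Real.exp_pos _
  set D : ℝ := C1 * (1 + ‖Ap‖) with hD
  set K : ℝ := (C1 * (1 + ‖Ap‖) + 1) * (C2 + 1) with hK
  have hAn : (0:ℝ) ≤ ‖Ap‖ := norm_nonneg _
  have hDnn : 0 ≤ D := by rw [hD]; positivity
  have hEdecomp : E = (P xj1 - P xj - h • P' xj) + h • ((P xj1 - P xj) * Ap) := by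
    rw [hE, hode xj]
    rw [sub_mul]
    module
  have hEbound : ‖E‖ ≤ D * h ^ 2 * e := by
    rw [hEdecomp]
    calc ‖(P xj1 - P xj - h • P' xj) + h • ((P xj1 - P xj) * Ap)‖
        ≤ ‖P xj1 - P xj - h • P' xj‖ + ‖h • ((P xj1 - P xj) * Ap)‖ := norm_add_le _ _
      _ ≤ M * h * h + ‖h‖ * ‖(P xj1 - P xj) * Ap‖ :=
          add_le_add htaylor (ContinuousLinearMap.opNorm_smul_le _ _)
      _ ≤ M * h * h + h * (M * h * ‖Ap‖) := by
          gcongr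
          · rw [Real.norm_eq_abs, abs_of_pos hpos]
          · calc ‖(P xj1 - P xj) * Ap‖ ≤ ‖P xj1 - P xj‖ * ‖Ap‖ := norm_mul_le _ _
              _ ≤ M * h * ‖Ap‖ := by gcongr
      _ = D * h ^ 2 * e := by rw [hD, hM, he]; ring
  have hDK : D ≤ K := by rw [hD, hK]; nlinarith
  have hfinal1 : ‖E‖ ≤ K * h ^ 2 * e := by
    refine le_trans hEbound ?_
    gcongr
  refine ⟨hfinal1, ?_⟩
  intro Wj
  set Zj := Pinv xj Wj with hZ
  have h1 : P xj Zj = Wj := by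
    have := DFunLike.congr_fun (hPinv xj).1 Wj
    simpa [ContinuousLinearMap.mul_apply] using this
  have h2 : ∀ v, Pinv xj1 (P xj1 v) = v := by
    intro v
    have := DFunLike.congr_fun (hPinv xj1).2 v
    simpa [ContinuousLinearMap.mul_apply] using this
  have halg : Pinv xj1 (Wj + h • A xj Wj) - Zj - h • Ap Zj = -(Pinv xj1 (E Zj)) := by
    have hEapp : E Zj = P xj1 Zj - Wj - h • (A xj Wj - P xj1 (Ap Zj)) := by
      rw [hE]
      simp only [ContinuousLinearMap.sub_apply, ContinuousLinearMap.smul_apply,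
        ContinuousLinearMap.mul_apply, h1]
    rw [hEapp]
    simp only [map_sub, map_add, ContinuousLinearMap.map_smul_of_tower, smul_sub, h2]
    abel
  have hC2' : ‖Pinv xj1‖ ≤ C2 := hPinvb xj1 (by linarith)
  rw [halg, norm_neg]
  have hZn : (0:ℝ) ≤ ‖Zj‖ := norm_nonneg _
  calc ‖Pinv xj1 (E Zj)‖ ≤ ‖Pinv xj1‖ * ‖E Zj‖ := (Pinv xj1).le_opNorm _
    _ ≤ C2 * (‖E‖ * ‖Zj‖) := by
        refine mul_le_mul hC2' (E.le_opNorm _) (norm_nonneg _) hC2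
    _ ≤ C2 * ((D * h ^ 2 * e) * ‖Zj‖) := by gcongr
    _ = (C2 * D) * (h ^ 2 * e * ‖Zj‖) := by ring
    _ ≤ K * (h ^ 2 * e * ‖Zj‖) := by
        refine mul_le_mul_of_nonneg_right ?_ (by positivity)
        rw [hK, hD]
        nlinarith
    _ = K * h ^ 2 * e * ‖Zj‖ := by ring
end

section
/- If Ω : J → ℂ^{n×k} is differentiable on an interval J and satisfies the Drury equation Ω' = (I − ΩΩ*)AΩ, then the Stiefel error ℰ := Ω*Ω − I_k satisfies the error equation ℰ' = − ℰ (Ω* A Ω) − (Ω* A Ω)* ℰ on J. -/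
open Matrix

attribute [local instance] Matrix.normedAddCommGroup Matrix.normedSpace

/-- Conjugate transpose as a continuous `ℝ`-linear map. -/
noncomputable def ctCLM (n k : ℕ) :
    Matrix (Fin n) (Fin k) ℂ →L[ℝ] Matrix (Fin k) (Fin n) ℂ :=
  LinearMap.toContinuousLinearMap
    { toFun := fun M => Mᴴ
      map_add' := fun M N => by ext i j; simp [Matrix.conjTranspose_apply]
      map_smul' := fun r M => by
        ext i j; simp [Matrix.conjTranspose_apply, Complex.ext_iff] }

/-- Matrix multiplication as a continuous `ℝ`-bilinear map. -/
noncomputable def mulCLM (k n : ℕ) :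
    Matrix (Fin k) (Fin n) ℂ →L[ℝ]
      Matrix (Fin n) (Fin k) ℂ →L[ℝ] Matrix (Fin k) (Fin k) ℂ :=
  LinearMap.toContinuousLinearMap
    { toFun := fun M => LinearMap.toContinuousLinearMap
        { toFun := fun N => M * N
          map_add' := fun N₁ N₂ => Matrix.mul_add M N₁ N₂
          map_smul' := fun r N => by simp [Matrix.mul_smul] }
      map_add' := fun M₁ M₂ => by ext N : 1; simp [Matrix.add_mul]
      map_smul' := fun r M => by ext N : 1; simp [Matrix.smul_mul] }

/-- Product rule for `y ↦ (Ω y)ᴴ * Ω y`. -/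
theorem hasDerivWithinAt_ct_mul {n k : ℕ} {Ω : ℝ → Matrix (Fin n) (Fin k) ℂ}
    {D : Matrix (Fin n) (Fin k) ℂ} {J : Set ℝ} {x : ℝ}
    (h : HasDerivWithinAt Ω D J x) :
    HasDerivWithinAt (fun y => (Ω y)ᴴ * Ω y) (Dᴴ * Ω x + (Ω x)ᴴ * D) J x := by
  have hct : HasDerivWithinAt (fun y => (Ω y)ᴴ) Dᴴ J x :=
    (ctCLM n k).hasFDerivAt.comp_hasDerivWithinAt x h
  letI : NormedAddCommGroup (Matrix (Fin n) (Fin k) ℂ →L[ℝ] Matrix (Fin k) (Fin k) ℂ) :=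
    ContinuousLinearMap.toNormedAddCommGroup
  letI : NormedSpace ℝ (Matrix (Fin n) (Fin k) ℂ →L[ℝ] Matrix (Fin k) (Fin k) ℂ) :=
    ContinuousLinearMap.toNormedSpace
  have h1 : HasDerivWithinAt (fun y => mulCLM k n ((Ω y)ᴴ)) (mulCLM k n Dᴴ) J x :=
    (mulCLM k n).hasFDerivAt.comp_hasDerivWithinAt x hct
  have := h1.clm_apply h
  convert this using 1
  all_goals first | rfl | simp [mulCLM]

/-- along solutions of the Drury equation `Ω' = (I - ΩΩᴴ)AΩ`, the Stiefel
error `ℰ := ΩᴴΩ - I` satisfies the error equation `ℰ' = -ℰ(ΩᴴAΩ) - (ΩᴴAΩ)ᴴℰ`. -/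
theorem stiefel_error_equation {n k : ℕ}
    (A : ℝ → Matrix (Fin n) (Fin n) ℂ) (hA : Continuous A)
    (J : Set ℝ) (hJ : J.OrdConnected)
    (Ω : ℝ → Matrix (Fin n) (Fin k) ℂ)
    (hΩ : ∀ x ∈ J, HasDerivWithinAt Ω ((1 - Ω x * (Ω x)ᴴ) * A x * Ω x) J x) :
    ∀ x ∈ J, HasDerivWithinAt (fun y => (Ω y)ᴴ * Ω y - 1)
      (-(((Ω x)ᴴ * Ω x - 1) * ((Ω x)ᴴ * A x * Ω x))
        - ((Ω x)ᴴ * A x * Ω x)ᴴ * ((Ω x)ᴴ * Ω x - 1)) J x := by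
  intro x hx
  have h := (hasDerivWithinAt_ct_mul (hΩ x hx)).sub_const 1
  convert h using 1
  rfl
  rfl
  rfl
  set W := Ω x; set B := A x
  simp only [Matrix.conjTranspose_mul, Matrix.conjTranspose_sub,
    Matrix.conjTranspose_one, Matrix.conjTranspose_conjTranspose,
    Matrix.sub_mul, Matrix.mul_sub, Matrix.one_mul, Matrix.mul_one,
    Matrix.mul_assoc]
  abel
end

section
/- If Ω : J → ℂ^{n×k} is differentiable on an interval J, satisfies the Drury equation Ω' = (I − ΩΩ*)AΩ, and Ω(x₀)*Ω(x₀) = I_k for some x₀ ∈ J, then Ω(x)*Ω(x) = I_k for all x ∈ J; that is, the Stiefel manifold {Ω : Ω*Ω = I_k} is invariant under the Drury flow. -/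
open Matrix Set

attribute [local instance] Matrix.normedAddCommGroup Matrix.normedSpace

lemma drury_mat_entry_deriv {a b : ℕ} {f : ℝ → Matrix (Fin a) (Fin b) ℂ}
    {f' : Matrix (Fin a) (Fin b) ℂ}
    {s : Set ℝ} {x : ℝ} (hf : HasDerivWithinAt f f' s x) (i : Fin a) (j : Fin b) :
    HasDerivWithinAt (fun t => f t i j) (f' i j) s x :=
  hasDerivWithinAt_pi.mp (hasDerivWithinAt_pi.mp hf i) j

lemma drury_mat_mul_deriv {a b c : ℕ} {f : ℝ → Matrix (Fin a) (Fin b) ℂ}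
    {g : ℝ → Matrix (Fin b) (Fin c) ℂ}
    {f' : Matrix (Fin a) (Fin b) ℂ} {g' : Matrix (Fin b) (Fin c) ℂ} {s : Set ℝ} {x : ℝ}
    (hf : HasDerivWithinAt f f' s x) (hg : HasDerivWithinAt g g' s x) :
    HasDerivWithinAt (fun t => f t * g t) (f' * g x + f x * g') s x := by
  refine hasDerivWithinAt_pi.mpr fun i => ?_
  refine hasDerivWithinAt_pi.mpr fun j => ?_
  have h1 : ∀ t, (f t * g t) i j = ∑ l, f t i l * g t l j := fun t => Matrix.mul_apply
  simp only [h1]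
  have h2 : (f' * g x + f x * g') i j = ∑ l, (f' i l * g x l j + f x i l * g' l j) := by
    simp [Matrix.mul_apply, Matrix.add_apply, Finset.sum_add_distrib]
  rw [h2]
  exact HasDerivWithinAt.fun_sum fun l _ =>
    (drury_mat_entry_deriv hf i l).mul (drury_mat_entry_deriv hg l j)

lemma drury_mat_conjT_deriv {a b : ℕ} {f : ℝ → Matrix (Fin a) (Fin b) ℂ}
    {f' : Matrix (Fin a) (Fin b) ℂ}
    {s : Set ℝ} {x : ℝ} (hf : HasDerivWithinAt f f' s x) :
    HasDerivWithinAt (fun t => (f t)ᴴ) f'ᴴ s x := by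
  refine hasDerivWithinAt_pi.mpr fun i => ?_
  refine hasDerivWithinAt_pi.mpr fun j => ?_
  exact (drury_mat_entry_deriv hf j i).star

lemma drury_mat_norm_mul_le {a b c : ℕ} (M : Matrix (Fin a) (Fin b) ℂ)
    (N : Matrix (Fin b) (Fin c) ℂ) :
    ‖M * N‖ ≤ b * ‖M‖ * ‖N‖ := by
  rw [Matrix.norm_le_iff (by positivity)]
  intro i j
  rw [Matrix.mul_apply]
  calc ‖∑ l, M i l * N l j‖ ≤ ∑ l : Fin b, ‖M i l * N l j‖ := norm_sum_le _ _
    _ ≤ ∑ _l : Fin b, ‖M‖ * ‖N‖ := Finset.sum_le_sum fun l _ => by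
        rw [norm_mul]
        exact mul_le_mul (Matrix.norm_entry_le_entrywise_sup_norm M)
          (Matrix.norm_entry_le_entrywise_sup_norm N) (norm_nonneg _) (norm_nonneg _)
    _ = b * ‖M‖ * ‖N‖ := by simp [mul_assoc]

set_option maxHeartbeats 1000000 in
/-- the Stiefel manifold `{Ω : ΩᴴΩ = I}` is invariant under the Drury flow
`Ω' = (I - ΩΩᴴ)AΩ`: if `Ω(x₀)ᴴΩ(x₀) = I` at some point of an interval `J`, then
`Ω(x)ᴴΩ(x) = I` on all of `J`. -/
theorem stiefel_manifold_invariant_under_drury_flow {n k : ℕ}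
    (A : ℝ → Matrix (Fin n) (Fin n) ℂ) (hA : Continuous A)
    (J : Set ℝ) (hJ : J.OrdConnected)
    (Ω : ℝ → Matrix (Fin n) (Fin k) ℂ)
    (hΩ : ∀ x ∈ J, HasDerivWithinAt Ω ((1 - Ω x * (Ω x)ᴴ) * A x * Ω x) J x)
    (x₀ : ℝ) (hx₀ : x₀ ∈ J) (horth : (Ω x₀)ᴴ * Ω x₀ = 1) :
    ∀ x ∈ J, (Ω x)ᴴ * Ω x = 1 := by
  set g : ℝ → Matrix (Fin k) (Fin k) ℂ := fun t => (Ω t)ᴴ * Ω t - 1 with hg_def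
  set B : ℝ → Matrix (Fin k) (Fin k) ℂ := fun t => -((Ω t)ᴴ * (A t)ᴴ * Ω t) with hB_def
  set C : ℝ → Matrix (Fin k) (Fin k) ℂ := fun t => -((Ω t)ᴴ * A t * Ω t) with hC_def
  have hΩcont : ContinuousOn Ω J := fun t ht => (hΩ t ht).continuousWithinAt
  have hmulc : Continuous fun pq : Matrix (Fin k) (Fin n) ℂ × Matrix (Fin n) (Fin k) ℂ =>
      pq.1 * pq.2 := continuous_fst.matrix_mul continuous_snd
  have hconjc : Continuous fun M : Matrix (Fin n) (Fin k) ℂ => Mᴴ :=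
    continuous_id.matrix_conjTranspose
  have hgcont : ContinuousOn g J := by
    have : ContinuousOn (fun t => (Ω t)ᴴ * Ω t) J :=
      by have h := hmulc.comp_continuousOn ((hconjc.comp_continuousOn hΩcont).prodMk hΩcont); exact h
    exact this.sub continuousOn_const
  -- the key differential identity : g' = B g + g C
  have hkey : ∀ t ∈ J, HasDerivWithinAt g (B t * g t + g t * C t) J t := by
    intro t ht
    have h1 := hΩ t ht
    have h2 := (drury_mat_mul_deriv (drury_mat_conjT_deriv h1) h1).sub_const 1
    refine HasDerivWithinAt.congr_deriv h2 ?_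
    simp only [hB_def, hC_def, hg_def, conjTranspose_mul, conjTranspose_sub, conjTranspose_one,
      conjTranspose_conjTranspose, Matrix.mul_sub, Matrix.sub_mul, Matrix.mul_one,
      Matrix.one_mul, neg_mul, mul_neg, Matrix.mul_assoc]
    abel
  intro x hx
  set a := min x₀ x with ha_def
  set b := max x₀ x with hb_def
  have hab : a ≤ b := min_le_max
  have hIJ : Icc a b ⊆ J := hJ.uIcc_subset hx₀ hx
  -- clamp to the compact interval
  set p : ℝ → ℝ := fun t => max a (min b t) with hp_def
  have hp_mem : ∀ t, p t ∈ Icc a b := fun t => ⟨le_max_left _ _, max_le hab (min_le_left _ _)⟩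
  have hp_eq : ∀ t ∈ Icc a b, p t = t := by
    intro t ht
    simp only [hp_def]
    rw [min_eq_right ht.2, max_eq_right ht.1]
  have hpc : Continuous p := continuous_const.max (continuous_const.min continuous_id)
  have hΩp : Continuous fun t => Ω (p t) :=
    hΩcont.comp_continuous hpc fun t => hIJ (hp_mem t)
  have hAp : Continuous fun t => A (p t) := hA.comp hpc
  set Bp : ℝ → Matrix (Fin k) (Fin k) ℂ := fun t => B (p t) with hBp_def
  set Cp : ℝ → Matrix (Fin k) (Fin k) ℂ := fun t => C (p t) with hCp_def
  have hBpc : Continuous Bp := by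
    simp only [hBp_def, hB_def]
    exact ((hΩp.matrix_conjTranspose.matrix_mul hAp.matrix_conjTranspose).matrix_mul hΩp).neg
  have hCpc : Continuous Cp := by
    simp only [hCp_def, hC_def]
    exact ((hΩp.matrix_conjTranspose.matrix_mul hAp).matrix_mul hΩp).neg
  obtain ⟨K₁, hK₁⟩ := (isCompact_Icc (a := a) (b := b)).exists_bound_of_continuousOn
    hBpc.continuousOn
  obtain ⟨K₂, hK₂⟩ := (isCompact_Icc (a := a) (b := b)).exists_bound_of_continuousOn
    hCpc.continuousOn
  have hK₁' : ∀ t, ‖Bp t‖ ≤ K₁ := by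
    intro t
    have h := hK₁ (p t) (hp_mem t)
    rwa [show Bp (p t) = Bp t by simp only [hBp_def]; rw [hp_eq _ (hp_mem t)]] at h
  have hK₂' : ∀ t, ‖Cp t‖ ≤ K₂ := by
    intro t
    have h := hK₂ (p t) (hp_mem t)
    rwa [show Cp (p t) = Cp t by simp only [hCp_def]; rw [hp_eq _ (hp_mem t)]] at h
  set Kr : ℝ := k * K₁ + k * K₂ with hKr_def
  set K : NNReal := Real.toNNReal Kr with hK_def
  set v : ℝ → Matrix (Fin k) (Fin k) ℂ → Matrix (Fin k) (Fin k) ℂ :=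
    fun t y => Bp t * y + y * Cp t with hv_def
  have hlip : ∀ t, LipschitzOnWith K (v t) univ := by
    intro t
    rw [lipschitzOnWith_iff_dist_le_mul]
    intro y _ z _
    rw [dist_eq_norm, dist_eq_norm]
    have hdiff : v t y - v t z = Bp t * (y - z) + (y - z) * Cp t := by
      simp only [hv_def, Matrix.mul_sub, Matrix.sub_mul]
      abel
    rw [hdiff]
    have hb1 := drury_mat_norm_mul_le (Bp t) (y - z)
    have hb2 := drury_mat_norm_mul_le (y - z) (Cp t)
    have h1 := hK₁' t
    have h2 := hK₂' t
    have hn : (0:ℝ) ≤ ‖y - z‖ := norm_nonneg _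
    have hk0 : (0:ℝ) ≤ (k:ℝ) := Nat.cast_nonneg k
    calc ‖Bp t * (y - z) + (y - z) * Cp t‖
        ≤ ‖Bp t * (y - z)‖ + ‖(y - z) * Cp t‖ := norm_add_le _ _
      _ ≤ k * ‖Bp t‖ * ‖y - z‖ + k * ‖y - z‖ * ‖Cp t‖ := add_le_add hb1 hb2
      _ ≤ Kr * ‖y - z‖ := by
          have e1 : (k:ℝ) * ‖Bp t‖ * ‖y - z‖ ≤ k * K₁ * ‖y - z‖ :=
            mul_le_mul_of_nonneg_right (mul_le_mul_of_nonneg_left h1 hk0) hn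
          have e2 : (k:ℝ) * ‖y - z‖ * ‖Cp t‖ ≤ k * K₂ * ‖y - z‖ := by
            rw [mul_right_comm]
            exact mul_le_mul_of_nonneg_right (mul_le_mul_of_nonneg_left h2 hk0) hn
          rw [hKr_def, add_mul]
          exact add_le_add e1 e2
      _ ≤ (K : ℝ) * ‖y - z‖ := mul_le_mul_of_nonneg_right (Real.le_coe_toNNReal Kr) hn
  -- the derivative identity restated with the clamped coefficients
  have hkey' : ∀ t ∈ Icc a b, HasDerivWithinAt g (v t (g t)) J t := by
    intro t ht
    have h := hkey t (hIJ ht)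
    have e : v t (g t) = B t * g t + g t * C t := by
      simp only [hv_def, hBp_def, hCp_def, hp_eq t ht]
    rwa [e]
  have hg0 : g x₀ = 0 := by
    simp only [hg_def, horth, sub_self]
  have hzero' : ∀ (t : ℝ) (s : Set ℝ), HasDerivWithinAt
      (fun _ : ℝ => (0 : Matrix (Fin k) (Fin k) ℂ)) (v t ((fun _ : ℝ => 0) t)) s t := by
    intro t s
    have : v t 0 = 0 := by simp [hv_def]
    show HasDerivWithinAt _ (v t 0) s t
    rw [this]
    exact hasDerivWithinAt_const t s (0 : Matrix (Fin k) (Fin k) ℂ)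
  have hgx : g x = 0 := by
    rcases le_total x₀ x with hc | hc
    · have ha' : a = x₀ := min_eq_left hc
      have hb' : b = x := max_eq_right hc
      have hIJ' : Icc x₀ x ⊆ J := by rw [← ha', ← hb']; exact hIJ
      have heq : EqOn g (fun _ => (0 : Matrix (Fin k) (Fin k) ℂ)) (Icc x₀ x) := by
        apply ODE_solution_unique_of_mem_Icc_right (s := fun _ => univ) (fun t _ => hlip t)
          (hgcont.mono hIJ') _ (fun _ _ => mem_univ _) continuousOn_const
          (fun t _ => hzero' t (Ici t)) (fun _ _ => mem_univ _) hg0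
        intro t ht
        have htI : t ∈ Icc a b := by rw [ha', hb']; exact Ico_subset_Icc_self ht
        have hsub : Icc t x ⊆ J := fun u hu =>
          hIJ' ⟨le_trans ht.1 hu.1, hu.2⟩
        have hmem : Icc t x ∈ nhdsWithin t (Ici t) := by
          rw [← Ici_inter_Iic]
          exact Filter.inter_mem self_mem_nhdsWithin
            (mem_nhdsWithin_of_mem_nhds (Iic_mem_nhds ht.2))
        exact (((hkey' t htI).mono hsub).mono_of_mem_nhdsWithin hmem)
      exact heq ⟨hc, le_refl x⟩
    · have ha' : a = x := min_eq_right hc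
      have hb' : b = x₀ := max_eq_left hc
      have hIJ' : Icc x x₀ ⊆ J := by rw [← ha', ← hb']; exact hIJ
      have heq : EqOn g (fun _ => (0 : Matrix (Fin k) (Fin k) ℂ)) (Icc x x₀) := by
        apply ODE_solution_unique_of_mem_Icc_left (s := fun _ => univ) (fun t _ => hlip t)
          (hgcont.mono hIJ') _ (fun _ _ => mem_univ _) continuousOn_const
          (fun t _ => hzero' t (Iic t)) (fun _ _ => mem_univ _) hg0
        intro t ht
        have htI : t ∈ Icc a b := by rw [ha', hb']; exact Ioc_subset_Icc_self ht
        have hsub : Icc x t ⊆ J := fun u hu =>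
          hIJ' ⟨hu.1, le_trans hu.2 ht.2⟩
        have hmem : Icc x t ∈ nhdsWithin t (Iic t) := by
          rw [← Ici_inter_Iic]
          exact Filter.inter_mem
            (mem_nhdsWithin_of_mem_nhds (Ici_mem_nhds ht.1)) self_mem_nhdsWithin
        exact (((hkey' t htI).mono hsub).mono_of_mem_nhdsWithin hmem)
      exact heq ⟨le_refl x, hc⟩
  have := hgx
  rw [hg_def] at this
  exact sub_eq_zero.mp this
end

section
/- Suppose r ∈ ℂ^n is an eigenvector of A₊ with A₊r = a r, and σ ∈ ℂ^k is a left eigenvector of α with σ*α = b σ*. Then Ω₀ := (I − Ω₊Ω₊*) r σ* satisfies (I − Ω₊Ω₊*)(A₊Ω₀ − Ω₀α) = (a − b) Ω₀; that is, Ω₀ is an eigenmatrix of the tangentially reduced linearized Drury operator with eigenvalue a − b. In particular, if every eigenvalue of α has strictly smaller real part than every eigenvalue of A₊ not associated with the range of Ω₊, these tangential eigenvalues all have positive real part. -/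
open Matrix

lemma mul_vecMulVec {n m k : ℕ} (A : Matrix (Fin n) (Fin m) ℂ)
    (r : Fin m → ℂ) (s : Fin k → ℂ) :
    A * vecMulVec r s = vecMulVec (A *ᵥ r) s := by
  ext i j
  simp [mul_apply, vecMulVec_apply, mulVec, dotProduct, Finset.sum_mul, mul_assoc]

lemma vecMulVec_mul {n m k : ℕ} (r : Fin n → ℂ) (s : Fin m → ℂ)
    (A : Matrix (Fin m) (Fin k) ℂ) :
    vecMulVec r s * A = vecMulVec r (s ᵥ* A) := by
  ext i j
  simp [mul_apply, vecMulVec_apply, vecMul, dotProduct, Finset.mul_sum, mul_assoc]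

/-- `Ω₀ := (I - Ω₊Ω₊ᴴ) r σᴴ` is an eigenmatrix of the tangentially
reduced linearized Drury operator `Ω ↦ (I - Ω₊Ω₊ᴴ)(A₊Ω - Ωα)`, with eigenvalue `a - b`;
in particular this eigenvalue has positive real part when `b.re < a.re`. -/
theorem eigenmatrix_of_reduced_linearized_drury {n k : ℕ}
    (Ωp : Matrix (Fin n) (Fin k) ℂ) (Ap : Matrix (Fin n) (Fin n) ℂ)
    (α : Matrix (Fin k) (Fin k) ℂ)
    (horth : Ωpᴴ * Ωp = 1)
    (hinv : Ap * Ωp = Ωp * α)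
    (r : Fin n → ℂ) (a : ℂ) (hr : r ≠ 0) (hra : Ap *ᵥ r = a • r)
    (σ : Fin k → ℂ) (b : ℂ) (hσ : σ ≠ 0) (hσb : star σ ᵥ* α = b • star σ) :
    (1 - Ωp * Ωpᴴ) * (Ap * ((1 - Ωp * Ωpᴴ) * vecMulVec r (star σ))
        - ((1 - Ωp * Ωpᴴ) * vecMulVec r (star σ)) * α)
      = (a - b) • ((1 - Ωp * Ωpᴴ) * vecMulVec r (star σ)) ∧
    (b.re < a.re → 0 < (a - b).re) := by
  constructor
  · set Q : Matrix (Fin n) (Fin n) ℂ := 1 - Ωp * Ωpᴴ with hQ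
    have hQΩ : Q * Ωp = 0 := by
      rw [hQ, Matrix.sub_mul, Matrix.one_mul, Matrix.mul_assoc, horth, Matrix.mul_one, sub_self]
    have hQQ : Q * Q = Q := by
      rw [hQ]
      have : Ωp * Ωpᴴ * (Ωp * Ωpᴴ) = Ωp * Ωpᴴ := by
        rw [Matrix.mul_assoc, ← Matrix.mul_assoc Ωpᴴ, horth, Matrix.one_mul]
      simp [Matrix.sub_mul, Matrix.mul_sub, this]
    have hQA : Q * Ap * Q = Q * Ap := by
      rw [hQ, Matrix.mul_sub, Matrix.mul_one, Matrix.mul_assoc, ← Matrix.mul_assoc Ap, hinv,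
        ← Matrix.mul_assoc, ← Matrix.mul_assoc, hQΩ, Matrix.zero_mul, Matrix.zero_mul, sub_zero]
    set M : Matrix (Fin n) (Fin k) ℂ := vecMulVec r (star σ) with hM
    have key : Q * (Ap * (Q * M) - Q * M * α)
        = (a - b) • (Q * M) := by
      have h1 : Q * (Ap * (Q * M)) = Q * (Ap * M) := by
        rw [← Matrix.mul_assoc, ← Matrix.mul_assoc, hQA, Matrix.mul_assoc]
      have h2 : Q * (Q * M * α) = Q * (M * α) := by
        rw [← Matrix.mul_assoc, ← Matrix.mul_assoc, hQQ, Matrix.mul_assoc]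
      rw [Matrix.mul_sub, h1, h2, hM, mul_vecMulVec, vecMulVec_mul, hra, hσb]
      ext i j
      simp [mul_apply, vecMulVec_apply, Finset.mul_sum]
      ring_nf
      rw [← Finset.sum_sub_distrib]
      congr 1
      ext x
      ring
    exact key
  · intro h
    simpa [Complex.sub_re] using sub_pos.mpr h
end

section
/- Let λ* ∈ I and R* ∈ ℂ^{N×k} satisfy Π(λ*) R* = R*. Then Kato's ODE R' = Π' R with initial condition R(λ*) = R* has a unique solution R : I → ℂ^{N×k} defined on all of I, and this solution satisfies, for every λ ∈ I: (i) rank R(λ) = rank R*; (ii) Π(λ) R(λ) = R(λ); and (iii) Π(λ) R'(λ) = 0. -/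
open Matrix

attribute [local instance] Matrix.normedAddCommGroup Matrix.normedSpace

open Set Filter Metric intervalIntegral MeasureTheory
open scoped Topology NNReal Nat Interval

section KatoAux

variable {E : Type*} [NormedAddCommGroup E] [NormedSpace ℝ E] [CompleteSpace E]

/-- Existence of a global solution on a compact interval for a linear ODE with bounded
continuous coefficient. -/
theorem kato_exists_solution_Icc (g : ℝ → E →L[ℝ] E) (hg : Continuous g)
    (K : ℝ≥0) (hK : ∀ t, ‖g t‖ ≤ K) {a b t₀ : ℝ} (ht₀ : t₀ ∈ Icc a b) (x₀ : E) :
    ∃ f : ℝ → E, f t₀ = x₀ ∧ ∀ t ∈ Icc a b, HasDerivAt f (g t (f t)) t := by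
  have hab : a ≤ b := ht₀.1.trans ht₀.2
  haveI : Nonempty (Icc a b) := ⟨⟨t₀, ht₀⟩⟩
  set π : ℝ → Icc a b := fun t => projIcc a b hab t with hπ
  have hπc : Continuous π := continuous_projIcc
  have hcont : ∀ f : C(Icc a b, E), Continuous fun τ : ℝ => g τ (f (π τ)) := fun f =>
    hg.clm_apply (f.continuous.comp hπc)
  have hii : ∀ (f : C(Icc a b, E)) (c d : ℝ),
      IntervalIntegrable (fun τ => g τ (f (π τ))) volume c d := fun f c d =>
    (hcont f).intervalIntegrable c d
  let Φ : C(Icc a b, E) → C(Icc a b, E) := fun f =>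
    ⟨fun t => x₀ + ∫ τ in t₀..(t : ℝ), g τ (f (π τ)),
      (continuous_const.add (intervalIntegral.continuous_primitive (hii f) t₀)).comp
        continuous_subtype_val⟩
  have hΦapp : ∀ (f : C(Icc a b, E)) (t : Icc a b),
      Φ f t = x₀ + ∫ τ in t₀..(t : ℝ), g τ (f (π τ)) := fun _ _ => rfl
  have step : ∀ (f h : C(Icc a b, E)) (n : ℕ) (d : ℝ),
      (∀ t : Icc a b, dist (f t) (h t) ≤ (K * |(t : ℝ) - t₀|) ^ n / n ! * d) →
      ∀ t : Icc a b,
        dist (Φ f t) (Φ h t) ≤ (K * |(t : ℝ) - t₀|) ^ (n + 1) / (n + 1)! * d := by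
    intro f h n d hd t
    rw [hΦapp, hΦapp, dist_add_left, dist_eq_norm, ←
      intervalIntegral.integral_sub (hii f _ _) (hii h _ _),
      intervalIntegral.norm_integral_eq_norm_integral_uIoc]
    calc
      ‖∫ τ in Ι t₀ (t : ℝ), (g τ (f (π τ)) - g τ (h (π τ)))‖ ≤
          ∫ τ in Ι t₀ (t : ℝ), (K : ℝ) * ((K * |τ - t₀|) ^ n / n ! * d) := by
        refine MeasureTheory.norm_integral_le_of_norm_le
          (Continuous.integrableOn_uIoc (by fun_prop)) ?_
        refine (ae_restrict_mem measurableSet_Ioc).mono fun τ hτ => ?_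
        have hmem : τ ∈ Icc a b := uIcc_subset_Icc ht₀ t.2 (Ioc_subset_Icc_self hτ)
        rw [← (g τ).map_sub]
        have h2 := hd (π τ)
        have hc : ((π τ : ℝ)) = τ := by rw [hπ]; simp [projIcc_of_mem hab hmem]
        rw [hc, dist_eq_norm] at h2
        calc ‖(g τ) (f (π τ) - h (π τ))‖ ≤ ‖g τ‖ * ‖f (π τ) - h (π τ)‖ := (g τ).le_opNorm _
          _ ≤ (K : ℝ) * ((↑K * |τ - t₀|) ^ n / ↑n ! * d) :=
            mul_le_mul (hK τ) h2 (norm_nonneg _) K.2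
      _ = (K * |(t : ℝ) - t₀|) ^ (n + 1) / (n + 1)! * d := by
        simp_rw [mul_pow, div_eq_mul_inv, mul_assoc, MeasureTheory.integral_const_mul,
          MeasureTheory.integral_mul_const, integral_pow_abs_sub_uIoc, div_eq_mul_inv,
          pow_succ' (K : ℝ), Nat.factorial_succ, Nat.cast_mul, Nat.cast_succ, mul_inv, mul_assoc]
  have hiter : ∀ (n : ℕ) (f h : C(Icc a b, E)) (t : Icc a b),
      dist (Φ^[n] f t) (Φ^[n] h t) ≤ (K * |(t : ℝ) - t₀|) ^ n / n ! * dist f h := by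
    intro n
    induction n with
    | zero =>
      intro f h t
      simpa using ContinuousMap.dist_apply_le_dist t
    | succ n ih =>
      intro f h t
      rw [Function.iterate_succ_apply', Function.iterate_succ_apply']
      exact step _ _ n _ (fun t => ih f h t) t
  have hiter' : ∀ (n : ℕ) (f h : C(Icc a b, E)),
      dist (Φ^[n] f) (Φ^[n] h) ≤ ((K : ℝ) * (b - a)) ^ n / n ! * dist f h := by
    intro n f h
    rw [ContinuousMap.dist_le_iff_of_nonempty]
    intro t
    refine (hiter n f h t).trans ?_
    have habs : |(t : ℝ) - t₀| ≤ b - a := by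
      rw [abs_sub_le_iff]; constructor <;> linarith [t.2.1, t.2.2, ht₀.1, ht₀.2]
    gcongr <;> first
      | exact dist_nonneg
      | exact mul_nonneg K.2 (abs_nonneg _)
      | exact habs
      | positivity
  obtain ⟨n, hn⟩ := ((FloorSemiring.tendsto_pow_div_factorial_atTop ((K : ℝ) * (b - a))).eventually
    (gt_mem_nhds zero_lt_one)).exists
  have h0 : (0 : ℝ) ≤ ((K : ℝ) * (b - a)) ^ n / n ! := by
    have : (0:ℝ) ≤ (K : ℝ) * (b - a) := mul_nonneg K.2 (by linarith [ht₀.1, ht₀.2])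
    positivity
  have hcontr : ContractingWith ⟨_, h0⟩ (Φ^[n]) :=
    ⟨by exact_mod_cast hn, LipschitzWith.of_dist_le_mul fun f h => hiter' n f h⟩
  obtain ⟨f, hf⟩ : ∃ f : C(Icc a b, E), Φ f = f := ⟨_, hcontr.isFixedPt_fixedPoint_iterate⟩
  set F : ℝ → E := fun t => x₀ + ∫ τ in t₀..t, g τ (f (π τ)) with hF
  have hFeq : ∀ t : Icc a b, F t = f t := fun t => by
    rw [← hf]; rfl
  refine ⟨F, by simp [hF], ?_⟩
  intro t ht
  have h1 : HasDerivAt F (g t (f (π t))) t := by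
    refine HasDerivAt.const_add x₀ ?_
    exact (intervalIntegral.integral_hasStrictDerivAt_right (hii f t₀ t)
      ((hcont f).stronglyMeasurableAtFilter volume (𝓝 t)) (hcont f).continuousAt).hasDerivAt
  have h2 : f (π t) = F t := by
    have : π t = ⟨t, ht⟩ := by rw [hπ]; simp [projIcc_of_mem hab ht]
    rw [this, hFeq ⟨t, ht⟩]
  rwa [h2] at h1

theorem kato_solution_unique {S : Set ℝ} (hS : S.OrdConnected) (L : ℝ → E →L[ℝ] E)
    (hL : ContinuousOn L S) {f h : ℝ → E}
    (hf : ∀ t ∈ S, HasDerivWithinAt f (L t (f t)) S t)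
    (hh : ∀ t ∈ S, HasDerivWithinAt h (L t (h t)) S t)
    {t₀ : ℝ} (ht₀ : t₀ ∈ S) (heq : f t₀ = h t₀) : ∀ t ∈ S, f t = h t := by
  intro lam hlam
  rcases le_total t₀ lam with hle | hle
  · -- forward in time
    have hsub : Icc t₀ lam ⊆ S := hS.out ht₀ hlam
    obtain ⟨C, hC⟩ := isCompact_Icc.exists_bound_of_continuousOn (hL.mono hsub)
    set v : ℝ → E → E := fun t x => L (projIcc t₀ lam hle t) x with hv
    have hlip : ∀ t : ℝ, LipschitzOnWith ⟨max C 0, le_max_right _ _⟩ (v t) univ := by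
      intro t
      refine ((L _).lipschitz.weaken ?_).lipschitzOnWith
      change ‖L _‖ ≤ max C 0
      exact (hC _ (projIcc t₀ lam hle t).2).trans (le_max_left _ _)
    have key : ∀ u : ℝ → E, (∀ t ∈ S, HasDerivWithinAt u (L t (u t)) S t) →
        ContinuousOn u (Icc t₀ lam) ∧
        ∀ t ∈ Ico t₀ lam, HasDerivWithinAt u (v t (u t)) (Ici t) t := by
      intro u hu
      constructor
      · exact fun t ht => ((hu t (hsub ht)).continuousWithinAt).mono hsub
      · intro t ht
        have h1 := ((hu t (hsub (Ico_subset_Icc_self ht))).mono hsub).mono_of_mem_nhdsWithin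
          (Icc_mem_nhdsGE_of_mem ht)
        have : v t (u t) = L t (u t) := by
          rw [hv]; simp [projIcc_of_mem hle (Ico_subset_Icc_self ht)]
        rwa [this]
    obtain ⟨hfc, hfd⟩ := key f hf
    obtain ⟨hhc, hhd⟩ := key h hh
    exact ODE_solution_unique_of_mem_Icc_right (fun t _ => hlip t) hfc hfd (fun t _ => mem_univ _)
      hhc hhd (fun t _ => mem_univ _) heq (right_mem_Icc.2 hle)
  · -- backward in time
    have hsub : Icc lam t₀ ⊆ S := hS.out hlam ht₀
    obtain ⟨C, hC⟩ := isCompact_Icc.exists_bound_of_continuousOn (hL.mono hsub)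
    set v : ℝ → E → E := fun t x => L (projIcc lam t₀ hle t) x with hv
    have hlip : ∀ t : ℝ, LipschitzOnWith ⟨max C 0, le_max_right _ _⟩ (v t) univ := by
      intro t
      refine ((L _).lipschitz.weaken ?_).lipschitzOnWith
      change ‖L _‖ ≤ max C 0
      exact (hC _ (projIcc lam t₀ hle t).2).trans (le_max_left _ _)
    have key : ∀ u : ℝ → E, (∀ t ∈ S, HasDerivWithinAt u (L t (u t)) S t) →
        ContinuousOn u (Icc lam t₀) ∧
        ∀ t ∈ Ioc lam t₀, HasDerivWithinAt u (v t (u t)) (Iic t) t := by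
      intro u hu
      constructor
      · exact fun t ht => ((hu t (hsub ht)).continuousWithinAt).mono hsub
      · intro t ht
        have h1 := ((hu t (hsub (Ioc_subset_Icc_self ht))).mono hsub).mono_of_mem_nhdsWithin
          (Icc_mem_nhdsLE_of_mem ht)
        have : v t (u t) = L t (u t) := by
          rw [hv]; simp [projIcc_of_mem hle (Ioc_subset_Icc_self ht)]
        rwa [this]
    obtain ⟨hfc, hfd⟩ := key f hf
    obtain ⟨hhc, hhd⟩ := key h hh
    exact ODE_solution_unique_of_mem_Icc_left (fun t _ => hlip t) hfc hfd (fun t _ => mem_univ _)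
      hhc hhd (fun t _ => mem_univ _) heq (left_mem_Icc.2 hle)

theorem kato_exists_solution_ordConnected {S : Set ℝ} (hS : S.OrdConnected)
    (L : ℝ → E →L[ℝ] E) (hL : ContinuousOn L S)
    {t₀ : ℝ} (ht₀ : t₀ ∈ S) (x₀ : E) :
    ∃ R : ℝ → E, R t₀ = x₀ ∧ ∀ t ∈ S, HasDerivWithinAt R (L t (R t)) S t := by
  classical
  have exF : ∀ c d : ℝ, c ∈ S → d ∈ S → t₀ ∈ Icc c d →
      ∃ F : ℝ → E, F t₀ = x₀ ∧ ∀ t ∈ Icc c d, HasDerivAt F (L t (F t)) t := by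
    intro c d hc hd ht
    have hcd : c ≤ d := ht.1.trans ht.2
    have hsub : Icc c d ⊆ S := hS.out hc hd
    obtain ⟨C, hC⟩ := isCompact_Icc.exists_bound_of_continuousOn (hL.mono hsub)
    set g : ℝ → E →L[ℝ] E := fun t => L (projIcc c d hcd t) with hg
    have hgc : Continuous g := (hL.mono hsub).comp_continuous
      (continuous_subtype_val.comp continuous_projIcc) (fun t => (projIcc c d hcd t).2)
    obtain ⟨F, hF0, hFd⟩ := kato_exists_solution_Icc g hgc ⟨max C 0, le_max_right _ _⟩
      (fun t => (hC _ (projIcc c d hcd t).2).trans (le_max_left _ _)) ht x₀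
    refine ⟨F, hF0, fun t htm => ?_⟩
    have := hFd t htm
    simpa [hg, projIcc_of_mem hcd htm] using this
  choose! F hF0 hFd using exF
  set R : ℝ → E := fun t => if h : t ∈ S then F (min t₀ t) (max t₀ t) t else x₀ with hR
  have hmem : ∀ t ∈ S, min t₀ t ∈ S ∧ max t₀ t ∈ S ∧ t₀ ∈ Icc (min t₀ t) (max t₀ t) := by
    intro t ht
    rcases le_total t₀ t with h | h
    · simp [min_eq_left h, max_eq_right h, ht₀, ht, h]
    · simp [min_eq_right h, max_eq_left h, ht₀, ht, h]
  have hRdef : ∀ t ∈ S, R t = F (min t₀ t) (max t₀ t) t := fun t ht => dif_pos ht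
  have agree : ∀ c d : ℝ, c ∈ S → d ∈ S → t₀ ∈ Icc c d →
      ∀ G : ℝ → E, G t₀ = x₀ → (∀ t ∈ Icc c d, HasDerivAt G (L t (G t)) t) →
      ∀ ν ∈ Icc c d, R ν = G ν := by
    intro c d hc hd ht G hG0 hGd ν hν
    have hνS : ν ∈ S := hS.out hc hd hν
    obtain ⟨hm, hM, ht'⟩ := hmem ν hνS
    rw [hRdef ν hνS]
    have hν' : ν ∈ Icc (min t₀ ν) (max t₀ ν) := ⟨min_le_right _ _, le_max_right _ _⟩
    have hsub2 : Icc (min t₀ ν) (max t₀ ν) ⊆ Icc c d :=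
      Icc_subset_Icc (le_min ht.1 hν.1) (max_le ht.2 hν.2)
    refine kato_solution_unique Set.ordConnected_Icc L
      (hL.mono (hsub2.trans (hS.out hc hd))) ?_ ?_ ht' ?_ ν hν'
    · exact fun t htm => (hFd _ _ hm hM ht' t htm).hasDerivWithinAt
    · exact fun t htm => (hGd t (hsub2 htm)).hasDerivWithinAt
    · rw [hF0 _ _ hm hM ht', hG0]
  refine ⟨R, ?_, ?_⟩
  · obtain ⟨hm, hM, ht'⟩ := hmem t₀ ht₀
    rw [hRdef t₀ ht₀, hF0 _ _ hm hM ht']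
  · intro μ hμ
    -- choose interval endpoints around μ
    obtain ⟨b', hb'S, hb'ge, ε, hε, hbε⟩ :
        ∃ b' ∈ S, μ ≤ b' ∧ ∃ ε > (0:ℝ), ∀ t ∈ S, t < μ + ε → t ≤ b' := by
      by_cases hex : ∃ ν ∈ S, μ < ν
      · obtain ⟨ν, hν, hμν⟩ := hex
        exact ⟨ν, hν, hμν.le, ν - μ, by linarith, fun t _ htl => by linarith⟩
      · push_neg at hex
        exact ⟨μ, hμ, le_rfl, 1, one_pos, fun t ht _ => hex t ht⟩
    obtain ⟨a', ha'S, ha'le, δ, hδ, haδ⟩ :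
        ∃ a' ∈ S, a' ≤ μ ∧ ∃ δ > (0:ℝ), ∀ t ∈ S, μ - δ < t → a' ≤ t := by
      by_cases hex : ∃ ν ∈ S, ν < μ
      · obtain ⟨ν, hν, hμν⟩ := hex
        exact ⟨ν, hν, hμν.le, μ - ν, by linarith, fun t _ htl => by linarith⟩
      · push_neg at hex
        exact ⟨μ, hμ, le_rfl, 1, one_pos, fun t ht _ => hex t ht⟩
    set c := min a' t₀ with hc
    set d := max b' t₀ with hd
    have hcS : c ∈ S := by
      rcases le_total a' t₀ with h | h
      · rwa [hc, min_eq_left h]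
      · rwa [hc, min_eq_right h]
    have hdS : d ∈ S := by
      rcases le_total b' t₀ with h | h
      · rwa [hd, max_eq_right h]
      · rwa [hd, max_eq_left h]
    have htIcc : t₀ ∈ Icc c d := ⟨min_le_right _ _, le_max_right _ _⟩
    have hμIcc : μ ∈ Icc c d :=
      ⟨(min_le_left a' t₀).trans ha'le, hb'ge.trans (le_max_left b' t₀)⟩
    have hG0 := hF0 c d hcS hdS htIcc
    have hGd := hFd c d hcS hdS htIcc
    have hEv : R =ᶠ[𝓝[S] μ] F c d := by
      have hball : S ∩ Metric.ball μ (min ε δ) ∈ 𝓝[S] μ :=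
        Filter.inter_mem self_mem_nhdsWithin
          (mem_nhdsWithin_of_mem_nhds (Metric.ball_mem_nhds μ (lt_min hε hδ)))
      filter_upwards [hball] with t htm
      obtain ⟨htS, htb⟩ := htm
      rw [Metric.mem_ball, Real.dist_eq, abs_sub_lt_iff] at htb
      have ht1 : t ≤ b' := hbε t htS (by have := min_le_left ε δ; linarith [htb.1])
      have ht2 : a' ≤ t := haδ t htS (by have := min_le_right ε δ; linarith [htb.2])
      exact agree c d hcS hdS htIcc (F c d) hG0 hGd t
        ⟨(min_le_left a' t₀).trans ht2, ht1.trans (le_max_left b' t₀)⟩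
    have hRμ : R μ = F c d μ := agree c d hcS hdS htIcc (F c d) hG0 hGd μ hμIcc
    have hder := ((hGd μ hμIcc).hasDerivWithinAt (s := S)).congr_of_eventuallyEq hEv hRμ
    rw [hRμ]
    exact hder

end KatoAux

section MatCLM

variable {m n p : ℕ}

/-- Continuous linear maps between normed spaces, with the normed instances. -/
abbrev KatoCLM (E F : Type*) [NormedAddCommGroup E] [NormedSpace ℝ E] [NormedAddCommGroup F]
    [NormedSpace ℝ F] := E →L[ℝ] F

/-- Left matrix multiplication as a continuous bilinear map (over `ℝ`). -/
noncomputable def katoMulCLM :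
    KatoCLM (Matrix (Fin m) (Fin n) ℂ) (KatoCLM (Matrix (Fin n) (Fin p) ℂ) (Matrix (Fin m) (Fin p) ℂ)) :=
  LinearMap.toContinuousLinearMap
  { toFun := fun A => LinearMap.toContinuousLinearMap
      { toFun := fun B => A * B
        map_add' := fun B C => Matrix.mul_add A B C
        map_smul' := fun r B => by simp [Matrix.mul_smul] }
    map_add' := fun A B => by
      ext C
      simp [Matrix.add_mul]
    map_smul' := fun r A => by
      ext B
      simp [Matrix.smul_mul] }

@[simp] lemma katoMulCLM_apply (A : Matrix (Fin m) (Fin n) ℂ) (B : Matrix (Fin n) (Fin p) ℂ) :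
    katoMulCLM A B = A * B := rfl

/-- Right matrix multiplication as a continuous bilinear map (over `ℝ`). -/
noncomputable def katoMulRCLM :
    KatoCLM (Matrix (Fin n) (Fin p) ℂ) (KatoCLM (Matrix (Fin m) (Fin n) ℂ) (Matrix (Fin m) (Fin p) ℂ)) :=
  LinearMap.toContinuousLinearMap
  { toFun := fun B => LinearMap.toContinuousLinearMap
      { toFun := fun A => A * B
        map_add' := fun A C => Matrix.add_mul A C B
        map_smul' := fun r A => by simp [Matrix.smul_mul] }
    map_add' := fun A B => by
      ext C
      simp [Matrix.mul_add]
    map_smul' := fun r A => by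
      ext B
      simp [Matrix.mul_smul] }

@[simp] lemma katoMulRCLM_apply (B : Matrix (Fin n) (Fin p) ℂ) (A : Matrix (Fin m) (Fin n) ℂ) :
    katoMulRCLM B A = A * B := rfl

theorem katoHD {N M : ℕ} {f : ℝ → Matrix (Fin N) (Fin M) ℂ} {f' : Matrix (Fin N) (Fin M) ℂ}
    {s : Set ℝ} {x : ℝ} (h : HasDerivWithinAt f f' s x) :
    @HasDerivWithinAt ℝ _ (Matrix (Fin N) (Fin M) ℂ) Matrix.normedAddCommGroup.toAddCommGroup
      Matrix.normedSpace.toModule (@PseudoMetricSpace.toUniformSpace _ (@SeminormedAddCommGroup.toPseudoMetricSpace _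
        (@NormedAddCommGroup.toSeminormedAddCommGroup _ Matrix.normedAddCommGroup))).toTopologicalSpace
      _ f f' s x := h

theorem katoHD' {N M : ℕ} {f : ℝ → Matrix (Fin N) (Fin M) ℂ} {f' : Matrix (Fin N) (Fin M) ℂ}
    {s : Set ℝ} {x : ℝ}
    (h : @HasDerivWithinAt ℝ _ (Matrix (Fin N) (Fin M) ℂ) Matrix.normedAddCommGroup.toAddCommGroup
      Matrix.normedSpace.toModule (@PseudoMetricSpace.toUniformSpace _ (@SeminormedAddCommGroup.toPseudoMetricSpace _
        (@NormedAddCommGroup.toSeminormedAddCommGroup _ Matrix.normedAddCommGroup))).toTopologicalSpace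
      _ f f' s x) :
    HasDerivWithinAt f f' s x := h

end MatCLM


/-- Kato's ODE `R' = Π'R`, `R(λ*) = R*` (for a `C¹` family of projections
`Π` on an interval `I`, and `Π(λ*)R* = R*`) has a unique global solution on `I`, which
moreover satisfies (i) `rank R(λ) = rank R*`, (ii) `Π(λ)R(λ) = R(λ)`, and
(iii) `Π(λ)R'(λ) = 0`, for all `λ ∈ I`. -/
theorem kato_ode_global_solution {N k : ℕ}
    (I : Set ℝ) (hI : I.OrdConnected) (hne : ∃ a ∈ I, ∃ b ∈ I, a < b)
    (P P' : ℝ → Matrix (Fin N) (Fin N) ℂ)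
    (hP : ∀ lam ∈ I, HasDerivWithinAt P (P' lam) I lam)
    (hP' : ContinuousOn P' I)
    (hproj : ∀ lam ∈ I, P lam * P lam = P lam)
    (lam0 : ℝ) (h0 : lam0 ∈ I)
    (R0 : Matrix (Fin N) (Fin k) ℂ) (hR0 : P lam0 * R0 = R0) :
    ∃ R : ℝ → Matrix (Fin N) (Fin k) ℂ,
      (∀ lam ∈ I, HasDerivWithinAt R (P' lam * R lam) I lam) ∧
      R lam0 = R0 ∧
      (∀ R2 : ℝ → Matrix (Fin N) (Fin k) ℂ,
        (∀ lam ∈ I, HasDerivWithinAt R2 (P' lam * R2 lam) I lam) → R2 lam0 = R0 →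
        ∀ lam ∈ I, R2 lam = R lam) ∧
      (∀ lam ∈ I, (R lam).rank = R0.rank) ∧
      (∀ lam ∈ I, P lam * R lam = R lam) ∧
      (∀ lam ∈ I, P lam * (P' lam * R lam) = 0) := by
  classical
  obtain ⟨a, haI, b, hbI, hab⟩ := hne
  have hPc : ContinuousOn P I := fun t ht => (hP t ht).continuousWithinAt
  have hconv : Convex ℝ I := convex_iff_ordConnected.mpr hI
  have hint : (interior I).Nonempty := by
    refine (Set.nonempty_Ioo.2 hab).mono ?_
    rw [← interior_Icc]
    exact interior_mono (hI.out haI hbI)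
  have hUD : UniqueDiffOn ℝ I := uniqueDiffOn_convex hconv hint
  -- Leibniz rule for the projection identity
  have hP'PP : ∀ t ∈ I, P' t * P t + P t * P' t = P' t := by
    intro t ht
    have hc :=
      (katoMulCLM (p := N)).hasFDerivAt.comp_hasDerivWithinAt t (katoHD (hP t ht))
    have h1 : HasDerivWithinAt (fun s => P s * P s) (P' t * P t + P t * P' t) I t := by
      exact katoHD' (by simpa using hc.clm_apply (katoHD (hP t ht)))
    have h2 : HasDerivWithinAt P (P' t * P t + P t * P' t) I t :=
      h1.congr (fun s hs => (hproj s hs).symm) (hproj t ht).symm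
    have e1 := (hP t ht).derivWithin (hUD t ht)
    have e2 := h2.derivWithin (hUD t ht)
    rw [← e2, e1]
  have hPP'P : ∀ t ∈ I, P t * P' t * P t = 0 := by
    intro t ht
    have h := congrArg (fun M => P t * M * P t) (hP'PP t ht)
    simp only [Matrix.mul_add, Matrix.add_mul] at h
    have hQ := hproj t ht
    have l1 : P t * (P' t * P t) * P t = P t * P' t * P t := by
      rw [← Matrix.mul_assoc, Matrix.mul_assoc (P t * P' t), hQ]
    have l2 : P t * (P t * P' t) * P t = P t * P' t * P t := by
      rw [← Matrix.mul_assoc, hQ]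
    rw [l1, l2] at h
    exact add_eq_left.mp h
  -- the ODE for R
  set L1 : ℝ → Matrix (Fin N) (Fin k) ℂ →L[ℝ] Matrix (Fin N) (Fin k) ℂ :=
    fun t => katoMulCLM (P' t) with hL1def
  have hL1 : ContinuousOn L1 I := katoMulCLM.continuous.comp_continuousOn hP'
  obtain ⟨R, hR0', hRd'⟩ := kato_exists_solution_ordConnected hI L1 hL1 h0 R0
  have hRd : ∀ t ∈ I, HasDerivWithinAt R (P' t * R t) I t := by
    intro t ht
    exact katoHD' (hRd' t ht)
  have huniq : ∀ R2 : ℝ → Matrix (Fin N) (Fin k) ℂ,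
      (∀ t ∈ I, HasDerivWithinAt R2 (P' t * R2 t) I t) → R2 lam0 = R0 →
      ∀ t ∈ I, R2 t = R t := by
    intro R2 h2 h20
    refine kato_solution_unique hI L1 hL1 ?_ ?_ h0 (h20.trans hR0'.symm)
    · intro t ht; exact katoHD (h2 t ht)
    · intro t ht; exact katoHD (hRd t ht)
  -- (ii) invariance
  have hPR : ∀ t ∈ I, P t * R t = R t := by
    set Sf : ℝ → Matrix (Fin N) (Fin k) ℂ := fun t => R t - P t * R t with hSf
    set L2 : ℝ → Matrix (Fin N) (Fin k) ℂ →L[ℝ] Matrix (Fin N) (Fin k) ℂ :=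
      fun t => katoMulCLM (-(P t * P' t)) with hL2def
    have hL2 : ContinuousOn L2 I :=
      katoMulCLM.continuous.comp_continuousOn
        ((katoMulCLM.continuous.comp_continuousOn hPc).clm_apply hP').neg
    have hSd : ∀ t ∈ I, HasDerivWithinAt Sf (L2 t (Sf t)) I t := by
      intro t ht
      have hc :=
        (katoMulCLM (p := k)).hasFDerivAt.comp_hasDerivWithinAt t (katoHD (hP t ht))
      have h1 : HasDerivWithinAt (fun s => P s * R s)
          (P' t * R t + P t * (P' t * R t)) I t := by
        exact katoHD' (by simpa using hc.clm_apply (katoHD (hRd t ht)))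
      have h2 : HasDerivWithinAt Sf
          ((P' t * R t) - (P' t * R t + P t * (P' t * R t))) I t := (hRd t ht).sub h1
      have hval : L2 t (Sf t) = (P' t * R t) - (P' t * R t + P t * (P' t * R t)) := by
        simp only [hL2def, hSf, katoMulCLM_apply]
        change -(P t * P' t) * (R t - P t * R t) = _
        have e1 : (P t * P' t) * (P t * R t) = 0 := by
          rw [← Matrix.mul_assoc, hPP'P t ht, Matrix.zero_mul]
        rw [Matrix.neg_mul, Matrix.mul_sub, e1, Matrix.mul_assoc]
        abel
      rw [hval]
      exact h2
    have hz0 : ∀ t ∈ I, HasDerivWithinAt (fun _ => (0 : Matrix (Fin N) (Fin k) ℂ))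
        (L2 t ((fun _ => (0 : Matrix (Fin N) (Fin k) ℂ)) t)) I t := by
      intro t ht
      exact katoHD' (by simpa using (hasDerivWithinAt_const t I (0 : Matrix (Fin N) (Fin k) ℂ)))
    have hS0 : Sf lam0 = 0 := by
      rw [hSf]; simp [hR0', hR0]
    have hzero := kato_solution_unique hI L2 hL2 (fun t ht => katoHD (hSd t ht))
      (fun t ht => katoHD (hz0 t ht)) h0 hS0
    intro t ht
    have h := hzero t ht
    rw [hSf] at h
    have h' : R t - P t * R t = 0 := h
    exact (sub_eq_zero.mp h').symm
  -- (iii)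
  have hPP'R : ∀ t ∈ I, P t * (P' t * R t) = 0 := by
    intro t ht
    calc P t * (P' t * R t) = P t * (P' t * (P t * R t)) := by rw [hPR t ht]
      _ = (P t * P' t * P t) * R t := by simp only [Matrix.mul_assoc]
      _ = 0 := by rw [hPP'P t ht, Matrix.zero_mul]
  -- (i) rank via fundamental solution
  have hrank : ∀ t ∈ I, (R t).rank = R0.rank := by
    set L3 : ℝ → Matrix (Fin N) (Fin N) ℂ →L[ℝ] Matrix (Fin N) (Fin N) ℂ :=
      fun t => katoMulCLM (P' t) with hL3def
    have hL3 : ContinuousOn L3 I := katoMulCLM.continuous.comp_continuousOn hP'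
    obtain ⟨T, hT0, hTd'⟩ := kato_exists_solution_ordConnected hI L3 hL3 h0 (1 : Matrix (Fin N) (Fin N) ℂ)
    have hTd : ∀ t ∈ I, HasDerivWithinAt T (P' t * T t) I t := by
      intro t ht; exact katoHD' (hTd' t ht)
    set L4 : ℝ → Matrix (Fin N) (Fin N) ℂ →L[ℝ] Matrix (Fin N) (Fin N) ℂ :=
      fun t => katoMulRCLM (-(P' t)) with hL4def
    have hL4 : ContinuousOn L4 I := katoMulRCLM.continuous.comp_continuousOn hP'.neg
    obtain ⟨W, hW0, hWd'⟩ := kato_exists_solution_ordConnected hI L4 hL4 h0 (1 : Matrix (Fin N) (Fin N) ℂ)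
    have hWd : ∀ t ∈ I, HasDerivWithinAt W (-(W t * P' t)) I t := by
      intro t ht
      have := hWd' t ht
      have e : L4 t (W t) = -(W t * P' t) := by rw [← Matrix.mul_neg]; rfl
      exact katoHD' (this.congr_deriv e)
    have hWT : ∀ t ∈ I, W t * T t = 1 := by
      have hd : ∀ t ∈ I, HasDerivWithinAt (fun s => W s * T s) 0 I t := by
        intro t ht
        have hc :=
          (katoMulCLM (p := N)).hasFDerivAt.comp_hasDerivWithinAt t (katoHD (hWd t ht))
        have h1 := hc.clm_apply (katoHD (hTd t ht))
        simp only [Function.comp_apply, katoMulCLM_apply] at h1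
        have hval : -(W t * P' t) * T t + W t * (P' t * T t) = 0 := by
          rw [Matrix.neg_mul, Matrix.mul_assoc]
          abel
        rw [hval] at h1
        exact katoHD' h1
      intro t ht
      have hconst := hconv.norm_image_sub_le_of_norm_hasDerivWithin_le (C := 0)
        (f' := fun _ => (0 : Matrix (Fin N) (Fin N) ℂ)) (fun t ht => katoHD (hd t ht))
        (fun x _ => by simp) h0 ht
      have : W t * T t - W lam0 * T lam0 = 0 := by
        have := hconst
        rw [zero_mul] at this
        exact norm_le_zero_iff.mp this
      have := sub_eq_zero.mp this
      rw [this, hW0, hT0, Matrix.one_mul]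
    have hTR : ∀ t ∈ I, R t = T t * R0 := by
      have hd : ∀ t ∈ I, HasDerivWithinAt (fun s => T s * R0) (P' t * (T t * R0)) I t := by
        intro t ht
        have := (katoMulRCLM (m := N) R0).hasFDerivAt.comp_hasDerivWithinAt t (katoHD (hTd t ht))
        rw [← Matrix.mul_assoc]
        exact katoHD' this
      have := huniq (fun s => T s * R0) hd (by show T lam0 * R0 = R0; rw [hT0, Matrix.one_mul])
      exact fun t ht => (this t ht).symm
    intro t ht
    have hdet : IsUnit (T t).det := by
      have := hWT t ht
      have hdet1 : (W t).det * (T t).det = 1 := by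
        rw [← Matrix.det_mul, this, Matrix.det_one]
      exact IsUnit.of_mul_eq_one _ (by rw [mul_comm] at hdet1; exact hdet1)
    rw [hTR t ht]
    exact Matrix.rank_mul_eq_right_of_isUnit_det (T t) R0 hdet
  exact ⟨R, hRd, hR0', huniq, hrank, hPR, hPP'R⟩
end
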